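/- One-step Lyapunov contraction for PAGE under the PŁ condition: under the assumptions of the PAGE analysis (each fᵢ L-smooth and τ-weakly convex, f μ-PŁ, stepsize γ ≤ 1/(L(1 + √(4τ/(L+τ))·√((1−p)/p))) with γ < 1/L if τ = 0, a = 1 − γ(L−τ)/2, b = γ(L−τ)/2), the conditional expectation of the Lyapunov function Ψ^{t+1} satisfies E[Ψ^{t+1} | F^t] ≤ ρ Ψ^t, where ρ = max(1 − (1−2b)γμ, 1 − p(1 − 1/(2a))) < 1. -/

import Mathlib

/-!
The proof is the usual Lyapunov bookkeeping. On the full-gradient branch the estimator error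
vanishes; on the other branch the new error is `(g - ∇F x) + (dᵢ - d̄)` with
`dᵢ = ∇fᵢ(x⁺) - ∇fᵢ(x)`, `x⁺ = x - γ g`, whose second moment is controlled by weak cocoercivity
`‖dᵢ‖² ≤ (L - τ)⟪dᵢ, x⁺ - x⟫ + Lτ‖x⁺ - x‖²` (cocoercivity of the convex function
`fᵢ + τ/2 ‖·‖²`). The descent lemma for `F` pays for the error at rate `γ/2`, the PŁ inequality
turns `-γ/2 ‖∇F x‖²` into a contraction of `F x - f⋆`, and the step-size bound makes the
`Lτγ²‖g‖²` term coming from weak cocoercivity absorbable by the descent term `(1 - Lγ)/2 ‖g‖²`.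
-/

open scoped RealInnerProductSpace

section Smooth

variable {X : Type*} [NormedAddCommGroup X] [InnerProductSpace ℝ X] [CompleteSpace X]
  {f : X → ℝ}

theorem HasGradientAt.hasDerivAt_comp_add_smul {f' x v : X} {t : ℝ}
    (hf : HasGradientAt f f' (x + t • v)) :
    HasDerivAt (fun s : ℝ => f (x + s • v)) ⟪f', v⟫ t := by
  have hline : HasDerivAt (fun s : ℝ => x + s • v) v t := by
    simpa using ((hasDerivAt_id t).smul_const v).const_add x
  simpa [Function.comp_def, InnerProductSpace.toDual_apply_apply] using
    hf.hasFDerivAt.comp_hasDerivAt t hline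

theorem le_add_inner_gradient_add_sq_of_lipschitz {M : ℝ} (hf : Differentiable ℝ f)
    (hlip : ∀ x y, ‖gradient f x - gradient f y‖ ≤ M * ‖x - y‖) (x y : X) :
    f y ≤ f x + ⟪gradient f x, y - x⟫ + M / 2 * ‖y - x‖ ^ 2 := by
  set v := y - x
  set φ : ℝ → ℝ := fun t => f (x + t • v) - t * ⟪gradient f x, v⟫ - M / 2 * t ^ 2 * ‖v‖ ^ 2
  have hφ : ∀ t, HasDerivAt φ (⟪gradient f (x + t • v) - gradient f x, v⟫ - M * t * ‖v‖ ^ 2) t := by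
    intro t
    refine ((((hf _).hasGradientAt.hasDerivAt_comp_add_smul).sub
      ((hasDerivAt_id t).mul_const ⟪gradient f x, v⟫)).sub
      (((hasDerivAt_pow 2 t).const_mul (M / 2)).mul_const (‖v‖ ^ 2))).congr_deriv ?_
    rw [inner_sub_left]
    push_cast
    ring
  have hφ' : ∀ t ∈ interior (Set.Icc (0 : ℝ) 1),
      ⟪gradient f (x + t • v) - gradient f x, v⟫ - M * t * ‖v‖ ^ 2 ≤ 0 := by
    rw [interior_Icc]
    intro t ht
    have : ⟪gradient f (x + t • v) - gradient f x, v⟫ ≤ M * t * ‖v‖ ^ 2 :=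
      calc ⟪gradient f (x + t • v) - gradient f x, v⟫
          ≤ ‖gradient f (x + t • v) - gradient f x‖ * ‖v‖ := real_inner_le_norm _ _
        _ ≤ M * ‖t • v‖ * ‖v‖ := by gcongr; simpa using hlip (x + t • v) x
        _ = M * t * ‖v‖ ^ 2 := by rw [norm_smul, Real.norm_of_nonneg ht.1.le]; ring
    linarith
  have hanti : AntitoneOn φ (Set.Icc 0 1) :=
    antitoneOn_of_hasDerivWithinAt_nonpos (convex_Icc 0 1)
      (fun t _ => (hφ t).continuousAt.continuousWithinAt) (fun t _ => (hφ t).hasDerivWithinAt) hφ'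
  have := hanti (Set.left_mem_Icc.2 zero_le_one) (Set.right_mem_Icc.2 zero_le_one) zero_le_one
  simp only [φ, v, one_smul, add_sub_cancel, zero_smul, add_zero] at this
  linarith

theorem ConvexOn.add_inner_gradient_le (hc : ConvexOn ℝ Set.univ f) {x : X}
    (hf : DifferentiableAt ℝ f x) (y : X) :
    f x + ⟪gradient f x, y - x⟫ ≤ f y := by
  have hline : ConvexOn ℝ Set.univ (fun t : ℝ => f (x + t • (y - x))) := by
    simpa [Function.comp_def, AffineMap.lineMap_apply, add_comm] using
      hc.comp_affineMap (AffineMap.lineMap x y)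
  have hd : HasDerivAt (fun t : ℝ => f (x + t • (y - x))) ⟪gradient f x, y - x⟫ 0 :=
    HasGradientAt.hasDerivAt_comp_add_smul (by simpa using hf.hasGradientAt)
  have := hline.le_slope_of_hasDerivAt trivial trivial zero_lt_one hd
  rw [slope_def_field] at this
  simp only [zero_smul, add_zero, one_smul, add_sub_cancel, sub_zero, div_one] at this
  linarith

theorem ConvexOn.add_inner_gradient_add_sq_le {M : ℝ} (hM : 0 < M) (hc : ConvexOn ℝ Set.univ f)
    (hf : Differentiable ℝ f) (hlip : ∀ x y, ‖gradient f x - gradient f y‖ ≤ M * ‖x - y‖)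
    (x y : X) :
    f x + ⟪gradient f x, y - x⟫ + ‖gradient f y - gradient f x‖ ^ 2 / (2 * M) ≤ f y := by
  set w := gradient f y - gradient f x
  -- the tangent plane at `x` and the quadratic upper bound at `y`, compared at `z`
  set z := y - M⁻¹ • w
  have htangent := hc.add_inner_gradient_le (hf x) z
  have hupper := le_add_inner_gradient_add_sq_of_lipschitz hf hlip y z
  have hzy : z - y = -(M⁻¹ • w) := by simp [z]
  have hsplit : ⟪gradient f x, z - x⟫ = ⟪gradient f x, y - x⟫ + ⟪gradient f x, z - y⟫ := by
    rw [← inner_add_right, sub_add_sub_cancel']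
  have hw : ⟪gradient f y, z - y⟫ - ⟪gradient f x, z - y⟫ = -(M⁻¹ * ‖w‖ ^ 2) := by
    rw [← inner_sub_left, hzy, inner_neg_right, real_inner_smul_right, real_inner_self_eq_norm_sq]
  have hzy2 : ‖z - y‖ ^ 2 = M⁻¹ ^ 2 * ‖w‖ ^ 2 := by
    rw [hzy, norm_neg, norm_smul, mul_pow, Real.norm_of_nonneg (inv_nonneg.2 hM.le)]
  have hcoef : -(M⁻¹ * ‖w‖ ^ 2) + M / 2 * (M⁻¹ ^ 2 * ‖w‖ ^ 2) = -(‖w‖ ^ 2 / (2 * M)) := by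
    field_simp
    ring
  rw [hzy2] at hupper
  linarith

theorem ConvexOn.norm_sub_gradient_sq_le_mul_inner {M : ℝ} (hM : 0 < M)
    (hc : ConvexOn ℝ Set.univ f) (hf : Differentiable ℝ f)
    (hlip : ∀ x y, ‖gradient f x - gradient f y‖ ≤ M * ‖x - y‖) (x y : X) :
    ‖gradient f x - gradient f y‖ ^ 2 ≤ M * ⟪gradient f x - gradient f y, x - y⟫ := by
  have hxy := hc.add_inner_gradient_add_sq_le hM hf hlip x y
  have hyx := hc.add_inner_gradient_add_sq_le hM hf hlip y x
  rw [norm_sub_rev] at hxy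
  have hinner : ⟪gradient f x - gradient f y, x - y⟫
      = -⟪gradient f x, y - x⟫ - ⟪gradient f y, x - y⟫ := by
    rw [inner_sub_left, ← neg_sub x y, inner_neg_right]
    ring
  have key : ‖gradient f x - gradient f y‖ ^ 2 / M ≤ ⟪gradient f x - gradient f y, x - y⟫ := by
    have : ‖gradient f x - gradient f y‖ ^ 2 / M
        = 2 * (‖gradient f x - gradient f y‖ ^ 2 / (2 * M)) := by
      field_simp
    linarith
  rwa [div_le_iff₀' hM] at key

theorem HasGradientAt.add_half_mul_norm_sq {f' z : X} (hf : HasGradientAt f f' z) (c : ℝ) :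
    HasGradientAt (fun w => f w + c / 2 * ‖w‖ ^ 2) (f' + c • z) z := by
  rw [hasGradientAt_iff_hasFDerivAt] at hf ⊢
  refine (hf.add ((hasStrictFDerivAt_norm_sq z).hasFDerivAt.const_mul (c / 2))).congr_fderiv ?_
  ext v
  simp [InnerProductSpace.toDual_apply_apply]
  ring

/-- `f + τ/2 ‖·‖²` is convex with `(L + τ)`-Lipschitz gradient, hence cocoercive; expanding the
squares gives the bound for `f`. -/
theorem norm_sub_gradient_sq_le_of_convexOn_add_sq {L τ : ℝ} (hτ : 0 ≤ τ) (hLτ : 0 < L + τ)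
    (hf : Differentiable ℝ f) (hlip : ∀ x y, ‖gradient f x - gradient f y‖ ≤ L * ‖x - y‖)
    (hwc : ConvexOn ℝ Set.univ (fun x => f x + τ / 2 * ‖x‖ ^ 2)) (x y : X) :
    ‖gradient f x - gradient f y‖ ^ 2
      ≤ (L - τ) * ⟪gradient f x - gradient f y, x - y⟫ + L * τ * ‖x - y‖ ^ 2 := by
  have hh := fun z => (hf z).hasGradientAt.add_half_mul_norm_sq τ
  have hsub : ∀ z w, gradient (fun x => f x + τ / 2 * ‖x‖ ^ 2) z
      - gradient (fun x => f x + τ / 2 * ‖x‖ ^ 2) w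
      = (gradient f z - gradient f w) + τ • (z - w) := by
    intro z w
    rw [(hh z).gradient, (hh w).gradient, smul_sub]
    abel
  have hlip' : ∀ z w, ‖gradient (fun x => f x + τ / 2 * ‖x‖ ^ 2) z
      - gradient (fun x => f x + τ / 2 * ‖x‖ ^ 2) w‖ ≤ (L + τ) * ‖z - w‖ := by
    intro z w
    rw [hsub]
    calc ‖(gradient f z - gradient f w) + τ • (z - w)‖
        ≤ L * ‖z - w‖ + τ * ‖z - w‖ := by
          refine (norm_add_le _ _).trans (add_le_add (hlip z w) ?_)
          rw [norm_smul, Real.norm_of_nonneg hτ]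
      _ = (L + τ) * ‖z - w‖ := by ring
  have hco := hwc.norm_sub_gradient_sq_le_mul_inner hLτ (fun z => (hh z).differentiableAt) hlip' x y
  rw [hsub, norm_add_sq_real, inner_add_left, inner_smul_right, real_inner_smul_left,
    real_inner_self_eq_norm_sq, norm_smul, Real.norm_of_nonneg hτ] at hco
  nlinarith

end Smooth

section Average

variable {X : Type*} [NormedAddCommGroup X] [InnerProductSpace ℝ X] {n : ℕ}

theorem hasGradientAt_average [CompleteSpace X] (f : Fin n → X → ℝ) {f' : Fin n → X} {z : X}
    (hf : ∀ i, HasGradientAt (f i) (f' i) z) :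
    HasGradientAt (fun w => (1 / n : ℝ) * ∑ i, f i w) ((1 / n : ℝ) • ∑ i, f' i) z := by
  rw [hasGradientAt_iff_hasFDerivAt]
  refine ((HasFDerivAt.fun_sum fun i _ => (hf i).hasFDerivAt).const_mul _).congr_fderiv ?_
  rw [map_smul, map_sum]

theorem norm_average_le (hn : n ≠ 0) {u : Fin n → X} {C : ℝ} (hu : ∀ i, ‖u i‖ ≤ C) :
    ‖(1 / n : ℝ) • ∑ i, u i‖ ≤ C := by
  have hn' : (0 : ℝ) < n := by positivity
  rw [norm_smul, Real.norm_of_nonneg (by positivity), one_div, inv_mul_le_iff₀ hn']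
  calc ‖∑ i, u i‖ ≤ ∑ i, ‖u i‖ := norm_sum_le _ _
    _ ≤ ∑ _i : Fin n, C := Finset.sum_le_sum fun i _ => hu i
    _ = n * C := by simp

theorem average_norm_add_sq (hn : n ≠ 0) (v : X) (u : Fin n → X) :
    (1 / n : ℝ) * ∑ i, ‖v + u i‖ ^ 2
      = ‖v‖ ^ 2 + 2 * ⟪v, (1 / n : ℝ) • ∑ i, u i⟫ + (1 / n : ℝ) * ∑ i, ‖u i‖ ^ 2 := by
  simp only [norm_add_sq_real, Finset.sum_add_distrib, ← Finset.mul_sum, ← inner_sum,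
    real_inner_smul_right, Finset.sum_const, Finset.card_univ, Fintype.card_fin, nsmul_eq_mul]
  field_simp

theorem average_norm_sub_gradient_sq_le [CompleteSpace X] (hn : n ≠ 0) {f : Fin n → X → ℝ}
    {L τ : ℝ} (hτ : 0 ≤ τ) (hLτ : 0 < L + τ) (hf : ∀ i, Differentiable ℝ (f i))
    (hlip : ∀ i x y, ‖gradient (f i) x - gradient (f i) y‖ ≤ L * ‖x - y‖)
    (hwc : ∀ i, ConvexOn ℝ Set.univ (fun x => f i x + τ / 2 * ‖x‖ ^ 2)) (x y : X) :
    (1 / n : ℝ) * ∑ i, ‖gradient (f i) x - gradient (f i) y‖ ^ 2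
      ≤ (L - τ) * ⟪(1 / n : ℝ) • ∑ i, (gradient (f i) x - gradient (f i) y), x - y⟫
        + L * τ * ‖x - y‖ ^ 2 := by
  have hsum := Finset.sum_le_sum fun i (_ : i ∈ Finset.univ) =>
    norm_sub_gradient_sq_le_of_convexOn_add_sq hτ hLτ (hf i) (hlip i) (hwc i) x y
  rw [Finset.sum_add_distrib, ← Finset.mul_sum, ← sum_inner, Finset.sum_const, Finset.card_univ,
    Fintype.card_fin, nsmul_eq_mul] at hsum
  rw [real_inner_smul_left]
  have hn' : (0 : ℝ) < n := by positivity
  calc (1 / n : ℝ) * ∑ i, ‖gradient (f i) x - gradient (f i) y‖ ^ 2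
      ≤ (1 / n : ℝ) * ((L - τ) * ⟪∑ i, (gradient (f i) x - gradient (f i) y), x - y⟫
        + n * (L * τ * ‖x - y‖ ^ 2)) := by gcongr
    _ = _ := by field_simp

theorem page_second_moment_le_of_average_sq_le (hn : n ≠ 0) {a b c : ℝ} (hab : a + b = 1)
    (ha : 0 ≤ a) (e g : X) (d : Fin n → X)
    (hd : (1 / n : ℝ) * ∑ i, ‖d i‖ ^ 2 ≤ -(2 * b) * ⟪(1 / n : ℝ) • ∑ i, d i, g⟫ + c * ‖g‖ ^ 2) :
    a * ((1 / n : ℝ) * ∑ i, ‖e - (1 / n : ℝ) • ∑ j, d j + d i‖ ^ 2)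
      + b * ((1 / n : ℝ) * ∑ i, ‖g + d i‖ ^ 2) ≤ a * ‖e‖ ^ 2 + (b + c) * ‖g‖ ^ 2 := by
  rw [average_norm_add_sq hn, average_norm_add_sq hn]
  set D := (1 / n : ℝ) • ∑ i, d i
  rw [norm_sub_sq_real, inner_sub_left, real_inner_self_eq_norm_sq]
  rw [real_inner_comm g] at hd
  obtain rfl : a = 1 - b := by linarith
  linarith [mul_nonneg ha (sq_nonneg ‖D‖)]

end Average

section StepSize

variable {L τ p γ : ℝ}

theorem page_stepsize_mul_le (hL : 0 < L)
    (hγ : γ ≤ 1 / (L * (1 + Real.sqrt (4 * τ / (L + τ)) * Real.sqrt ((1 - p) / p)))) :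
    L * γ * (1 + Real.sqrt (4 * τ / (L + τ)) * Real.sqrt ((1 - p) / p)) ≤ 1 := by
  rw [le_div_iff₀ (by positivity)] at hγ
  linarith

theorem page_stepsize_mul_lt_one (hL : 0 < L) (hτ0 : 0 ≤ τ) (hγ0 : 0 < γ)
    (hγ : γ ≤ 1 / (L * (1 + Real.sqrt (4 * τ / (L + τ)) * Real.sqrt ((1 - p) / p))))
    (hγτ : τ = 0 → γ < 1 / L) :
    γ * (L - τ) < 1 := by
  rcases hτ0.eq_or_lt with rfl | hτ
  · have := hγτ rfl
    rw [lt_div_iff₀ hL] at this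
    linarith
  · have := page_stepsize_mul_le hL hγ
    have : 0 ≤ L * γ * (Real.sqrt (4 * τ / (L + τ)) * Real.sqrt ((1 - p) / p)) := by positivity
    nlinarith

theorem page_stepsize_variance_le (hL : 0 < L) (hτ0 : 0 ≤ τ) (hτL : τ ≤ L) (hp0 : 0 < p)
    (hp1 : p ≤ 1) (hγ0 : 0 < γ)
    (hγ : γ ≤ 1 / (L * (1 + Real.sqrt (4 * τ / (L + τ)) * Real.sqrt ((1 - p) / p)))) :
    2 * ((1 - p) / p) * (L * τ * γ ^ 2) ≤ 1 - L * γ := by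
  have hstep := page_stepsize_mul_le hL hγ
  set q := (1 - p) / p
  have hq : 0 ≤ q := div_nonneg (by linarith) hp0.le
  set c := Real.sqrt (4 * τ / (L + τ)) * Real.sqrt q
  have hc : 0 ≤ c := by positivity
  have hc2 : c ^ 2 * (L + τ) = 4 * τ * q := by
    rw [mul_pow, Real.sq_sqrt (by positivity), Real.sq_sqrt hq]
    field_simp
  have hLγc : L * γ * c ≤ 1 - L * γ := by linarith
  have hsq : (L * γ * c) ^ 2 ≤ 1 - L * γ := by
    have : 0 ≤ L * γ * c := by positivity
    nlinarith [mul_pos hL hγ0]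
  -- `(L γ c)² = 4 L² γ² τ q / (L + τ) ≥ 2 L τ γ² q` because `L + τ ≤ 2 L`
  have : 2 * q * (L * τ * γ ^ 2) * (L + τ) ≤ (L * γ * c) ^ 2 * (L + τ) := by
    have : 0 ≤ q * τ * L * γ ^ 2 * (L - τ) := by
      have := sub_nonneg.2 hτL
      positivity
    rw [show (L * γ * c) ^ 2 * (L + τ) = L ^ 2 * γ ^ 2 * (c ^ 2 * (L + τ)) by ring, hc2]
    nlinarith
  have hLτ : 0 < L + τ := by linarith
  nlinarith [le_of_mul_le_mul_right this hLτ]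

theorem page_rate_lt_one {μ a b : ℝ} (hμ : 0 < μ) (hp0 : 0 < p) (hγ0 : 0 < γ) (hab : a + b = 1)
    (h2b : 2 * b < 1) :
    max (1 - (1 - 2 * b) * γ * μ) (1 - p * (1 - 1 / (2 * a))) < 1 := by
  have h2a : 1 < 2 * a := by linarith
  refine max_lt ?_ ?_
  · nlinarith [mul_pos (mul_pos (sub_pos.2 h2b) hγ0) hμ]
  · have : 1 / (2 * a) < 1 := (div_lt_one (by linarith)).2 h2a
    nlinarith

theorem sub_le_mul_sub_of_PL {A S μ γ b ρ : ℝ} (hA : 0 ≤ A) (hS : 0 ≤ S) (hPL : 2 * μ * A ≤ S)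
    (hγ : 0 ≤ γ) (hb : 0 ≤ b) (h2b : 2 * b ≤ 1) (hρμ : 1 - (1 - 2 * b) * γ * μ ≤ ρ) (hρ : ρ ≤ 1) :
    A - γ / 2 * S ≤ ρ * A - ρ * (b * γ) * S := by
  have h1 : (1 - 2 * b) * γ / 2 * (2 * μ * A) ≤ (1 - 2 * b) * γ / 2 * S := by
    gcongr
  have h2 : (1 - (1 - 2 * b) * γ * μ) * A ≤ ρ * A := by gcongr
  have h3 : ρ * (b * γ * S) ≤ b * γ * S := mul_le_of_le_one_left (by positivity) hρ
  nlinarith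

end StepSize

section Page

variable {X : Type*} [NormedAddCommGroup X] [InnerProductSpace ℝ X] [CompleteSpace X]

theorem apply_sub_smul_le_of_lipschitz_gradient {F : X → ℝ} {M : ℝ} (hF : Differentiable ℝ F)
    (hlip : ∀ x y, ‖gradient F x - gradient F y‖ ≤ M * ‖x - y‖) (γ : ℝ) (x g : X) :
    F (x - γ • g) ≤ F x - γ / 2 * ‖gradient F x‖ ^ 2 - γ / 2 * (1 - M * γ) * ‖g‖ ^ 2
      + γ / 2 * ‖g - gradient F x‖ ^ 2 := by
  have hdesc := le_add_inner_gradient_add_sq_of_lipschitz hF hlip x (x - γ • g)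
  rw [sub_sub_cancel_left, inner_neg_right, real_inner_smul_right, norm_neg, norm_smul, mul_pow,
    Real.norm_eq_abs, sq_abs] at hdesc
  have hpolar := norm_sub_sq_real g (gradient F x)
  rw [real_inner_comm] at hpolar
  linear_combination hdesc - γ / 2 * hpolar

/-- The paper's `Ψ`, with `Fstar` for `f⋆`. -/
noncomputable def pageLyapunov (F : X → ℝ) (Fstar a b γ p : ℝ) (x g : X) : ℝ :=
  F x - Fstar - b * γ * ‖gradient F x‖ ^ 2 + a * γ / p * ‖g - gradient F x‖ ^ 2
    + b * γ / p * ‖g‖ ^ 2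

/-- The `-b γ ‖∇F x‖²` term of `Ψ` is cancelled in expectation by the `b γ / p ‖g‖²` term on
the full-gradient branch. -/
theorem pageLyapunov_expectation_eq {n : ℕ} (hn : n ≠ 0) {p : ℝ} (hp : p ≠ 0) (F : X → ℝ)
    (Fstar a b γ : ℝ) (x : X) (w : Fin n → X) :
    p * pageLyapunov F Fstar a b γ p x (gradient F x)
      + (1 - p) * ((1 / n : ℝ) * ∑ i, pageLyapunov F Fstar a b γ p x (w i))
      = F x - Fstar + (1 - p) / p * γ * (a * ((1 / n : ℝ) * ∑ i, ‖w i - gradient F x‖ ^ 2)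
        + b * ((1 / n : ℝ) * ∑ i, ‖w i‖ ^ 2)) := by
  simp only [pageLyapunov, sub_self, norm_zero, Finset.sum_add_distrib, Finset.sum_sub_distrib,
    ← Finset.mul_sum, Finset.sum_const, Finset.card_univ, Fintype.card_fin, nsmul_eq_mul]
  field_simp
  ring

theorem page_estimator_second_moment_le {n : ℕ} (hn : n ≠ 0) {f : Fin n → X → ℝ}
    {F : X → ℝ} {L τ γ a b : ℝ} (hτ0 : 0 ≤ τ) (hLτ : 0 < L + τ)
    (hdiff : ∀ i, Differentiable ℝ (f i))
    (hlip : ∀ i x y, ‖gradient (f i) x - gradient (f i) y‖ ≤ L * ‖x - y‖)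
    (hwc : ∀ i, ConvexOn ℝ Set.univ (fun x => f i x + τ / 2 * ‖x‖ ^ 2))
    (hgradF : ∀ z, gradient F z = (1 / n : ℝ) • ∑ i, gradient (f i) z)
    (hab : a + b = 1) (ha : 0 ≤ a) (hb : b = γ * (L - τ) / 2) (x g : X) :
    a * ((1 / n : ℝ) * ∑ i,
        ‖g + gradient (f i) (x - γ • g) - gradient (f i) x - gradient F (x - γ • g)‖ ^ 2)
      + b * ((1 / n : ℝ) * ∑ i, ‖g + gradient (f i) (x - γ • g) - gradient (f i) x‖ ^ 2)
      ≤ a * ‖g - gradient F x‖ ^ 2 + (b + L * τ * γ ^ 2) * ‖g‖ ^ 2 := by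
  set d := fun i => gradient (f i) (x - γ • g) - gradient (f i) x
  have hD : gradient F (x - γ • g) - gradient F x = (1 / n : ℝ) • ∑ i, d i := by
    rw [hgradF, hgradF, ← smul_sub, ← Finset.sum_sub_distrib]
  have hcoco := average_norm_sub_gradient_sq_le hn hτ0 hLτ hdiff hlip hwc (x - γ • g) x
  rw [sub_sub_cancel_left, inner_neg_right, real_inner_smul_right, norm_neg, norm_smul, mul_pow,
    Real.norm_eq_abs, sq_abs] at hcoco
  have hsecond := page_second_moment_le_of_average_sq_le hn hab ha (g - gradient F x) g d
    (c := L * τ * γ ^ 2) (by rw [hb]; linarith)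
  rw [← hD] at hsecond
  have hnext : ∀ i, g + gradient (f i) (x - γ • g) - gradient (f i) x = g + d i := fun i =>
    add_sub_assoc _ _ _
  simp only [hnext]
  convert hsecond using 7 with i
  abel

theorem page_coefficients_le {L τ p γ a b ρ : ℝ} (hp0 : 0 < p) (hγ0 : 0 < γ) (ha : 0 < a)
    (hb : 0 ≤ b) (hvar : 2 * ((1 - p) / p) * (L * τ * γ ^ 2) ≤ 1 - L * γ)
    (hρ : 1 - p * (1 - 1 / (2 * a)) ≤ ρ) :
    γ / 2 + (1 - p) / p * γ * a ≤ ρ * (a * γ / p) ∧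
      (1 - p) / p * γ * (b + L * τ * γ ^ 2) - γ / 2 * (1 - L * γ) ≤ ρ * (b * γ / p) := by
  have hρa : (1 - p * (1 - 1 / (2 * a))) * (a * γ / p) = (1 - p) / p * γ * a + γ / 2 := by
    field_simp
    ring
  have hρp : 1 - p ≤ ρ := by
    have : 0 ≤ p * (1 / (2 * a)) := by positivity
    linarith
  constructor
  · nlinarith [mul_le_mul_of_nonneg_right hρ (by positivity : 0 ≤ a * γ / p)]
  · have h1 : (1 - p) * (b * γ / p) ≤ ρ * (b * γ / p) := by gcongr
    have h2 : (1 - p) * (b * γ / p) = (1 - p) / p * γ * b := by ring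
    nlinarith

theorem pageLyapunov_expected_step_le {n : ℕ} (hn : n ≠ 0) {f : Fin n → X → ℝ} {F : X → ℝ}
    {L τ μ p γ a b ρ Fstar : ℝ} (hτ0 : 0 ≤ τ) (hLτ : 0 < L + τ)
    (hdiff : ∀ i, Differentiable ℝ (f i))
    (hlip : ∀ i x y, ‖gradient (f i) x - gradient (f i) y‖ ≤ L * ‖x - y‖)
    (hwc : ∀ i, ConvexOn ℝ Set.univ (fun x => f i x + τ / 2 * ‖x‖ ^ 2))
    (hF : F = fun y => (1 / n : ℝ) * ∑ i, f i y)
    (hFstar : ∀ x, Fstar ≤ F x) (hPL : ∀ x, 2 * μ * (F x - Fstar) ≤ ‖gradient F x‖ ^ 2)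
    (hp0 : 0 < p) (hp1 : p ≤ 1) (hγ0 : 0 < γ) (hab : a + b = 1) (hb : b = γ * (L - τ) / 2)
    (hb0 : 0 ≤ b) (h2b : 2 * b < 1)
    (hvar : 2 * ((1 - p) / p) * (L * τ * γ ^ 2) ≤ 1 - L * γ)
    (hρμ : 1 - (1 - 2 * b) * γ * μ ≤ ρ) (hρp : 1 - p * (1 - 1 / (2 * a)) ≤ ρ) (hρ : ρ ≤ 1)
    (x g : X) :
    p * pageLyapunov F Fstar a b γ p (x - γ • g) (gradient F (x - γ • g))
      + (1 - p) * ((1 / n : ℝ) * ∑ i, pageLyapunov F Fstar a b γ p (x - γ • g)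
          (g + gradient (f i) (x - γ • g) - gradient (f i) x))
      ≤ ρ * pageLyapunov F Fstar a b γ p x g := by
  have hgradF : ∀ z, HasGradientAt F ((1 / n : ℝ) • ∑ i, gradient (f i) z) z := fun z =>
    hF ▸ hasGradientAt_average f fun i => (hdiff i z).hasGradientAt
  have hFlip : ∀ z w, ‖gradient F z - gradient F w‖ ≤ L * ‖z - w‖ := by
    intro z w
    rw [(hgradF z).gradient, (hgradF w).gradient, ← smul_sub, ← Finset.sum_sub_distrib]
    exact norm_average_le hn fun i => hlip i z w
  have hsecond := page_estimator_second_moment_le hn hτ0 hLτ hdiff hlip hwc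
    (fun z => (hgradF z).gradient) hab (by linarith) hb x g
  have hdesc := apply_sub_smul_le_of_lipschitz_gradient
    (fun z => (hgradF z).differentiableAt) hFlip γ x g
  have hPLstep := sub_le_mul_sub_of_PL (sub_nonneg.2 (hFstar x)) (sq_nonneg _) (hPL x) hγ0.le
    hb0 h2b.le hρμ hρ
  obtain ⟨he, hg⟩ := page_coefficients_le hp0 hγ0 (by linarith) hb0 hvar hρp
  have hq : 0 ≤ (1 - p) / p * γ := by
    have : 0 ≤ 1 - p := by linarith
    positivity
  rw [pageLyapunov_expectation_eq hn hp0.ne']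
  unfold pageLyapunov
  nlinarith [mul_le_mul_of_nonneg_left hsecond hq,
    mul_le_mul_of_nonneg_right he (sq_nonneg ‖g - gradient F x‖),
    mul_le_mul_of_nonneg_right hg (sq_nonneg ‖g‖)]

end Page

/-- One-step Lyapunov contraction for PAGE under the PŁ condition.
The conditional expectation of `Ψ^{t+1}` given the current state `(x, g)` is written out
explicitly as the mixture over the coin `θ` and the uniform index `i`. -/
theorem page_one_step_contraction_PL
    {X : Type*} [NormedAddCommGroup X] [InnerProductSpace ℝ X]
    [FiniteDimensional ℝ X]
    (n : ℕ) (hn : 0 < n) (f : Fin n → X → ℝ) (L τ μ : ℝ)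
    (hL : 0 < L) (hτ0 : 0 ≤ τ) (hτL : τ ≤ L) (hμ : 0 < μ)
    (hdiff : ∀ i, Differentiable ℝ (f i))
    (hlip : ∀ i, ∀ x y : X, ‖gradient (f i) x - gradient (f i) y‖ ≤ L * ‖x - y‖)
    (hwc : ∀ i, ConvexOn ℝ Set.univ (fun x => f i x + τ / 2 * ‖x‖ ^ 2))
    (F : X → ℝ) (hF : F = fun y => (1 / n : ℝ) * ∑ i, f i y)
    (hbdd : BddBelow (Set.range F))
    (hPL : ∀ x : X, ‖gradient F x‖ ^ 2 ≥ 2 * μ * (F x - sInf (Set.range F)))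
    (p γ a b ρ : ℝ) (hp0 : 0 < p) (hp1 : p ≤ 1) (hγ0 : 0 < γ)
    (hγ : γ ≤ 1 / (L * (1 + Real.sqrt (4 * τ / (L + τ)) * Real.sqrt ((1 - p) / p))))
    (hγτ : τ = 0 → γ < 1 / L)
    (ha : a = 1 - γ * (L - τ) / 2) (hb : b = γ * (L - τ) / 2)
    (hρ : ρ = max (1 - (1 - 2 * b) * γ * μ) (1 - p * (1 - 1 / (2 * a))))
    (Ψ : X → X → ℝ)
    (hΨ : Ψ = fun x g => F x - sInf (Set.range F) - b * γ * ‖gradient F x‖ ^ 2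
        + a * γ / p * ‖g - gradient F x‖ ^ 2 + b * γ / p * ‖g‖ ^ 2) :
    ρ < 1 ∧
    ∀ x g : X,
      p * Ψ (x - γ • g) (gradient F (x - γ • g)) +
        (1 - p) * ((1 / n : ℝ) * ∑ i,
          Ψ (x - γ • g) (g + gradient (f i) (x - γ • g) - gradient (f i) x)) ≤
      ρ * Ψ x g := by
  have hΨ' : Ψ = pageLyapunov F (sInf (Set.range F)) a b γ p := hΨ
  have hab : a + b = 1 := by rw [ha, hb]; ring
  have hb0 : 0 ≤ b := by rw [hb]; have := mul_nonneg hγ0.le (sub_nonneg.2 hτL); linarith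
  have h2b : 2 * b < 1 := by
    rw [hb]; linarith [page_stepsize_mul_lt_one hL hτ0 hγ0 hγ hγτ]
  have hρlt : ρ < 1 := hρ ▸ page_rate_lt_one hμ hp0 hγ0 hab h2b
  refine ⟨hρlt, fun x g => hΨ' ▸ pageLyapunov_expected_step_le hn.ne' hτ0 (by linarith) hdiff hlip
    hwc hF (fun z => csInf_le hbdd ⟨z, rfl⟩) hPL hp0 hp1 hγ0 hab hb hb0 h2b
    (page_stepsize_variance_le hL hτ0 hτL hp0 hp1 hγ0 hγ) (hρ ▸ le_max_left _ _)
    (hρ ▸ le_max_right _ _) hρlt.le x g⟩
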